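/- Let (T_t)_{t≥0} be a positive one-parameter contraction semigroup (strongly continuous) acting on ℓᵖ(X) for a countable set X and 1 ≤ p < ∞. Then the peripheral point spectrum of its generator contains no nonzero element: if f ∈ ℓᵖ(X), θ ∈ ℝ, f ≠ 0, and T_t f = e^{iθt} f for all t ≥ 0, then θ = 0. -/

import Mathlib

/-!
If `T f = c f` with `|c| = 1`, positivity and reality of `T` give `|T g| ≤ T|g|` pointwise, so
`|f| = |T f| ≤ T|f|`; since `T` is a contraction and the `ℓᵖ` norm is strictly monotone,
`T|f| = |f|`. Testing the domination on `g = f - f(x₀) δ_{x₀}` yields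
`|c - k| ≤ 1 - k` for the diagonal entry `k = (T δ_{x₀})(x₀) ≥ 0`, which forces `c = 1` as soon as
`k > 0`. By strong continuity `k(t) → 1` as `t → 0`, so `e^{iθt} = 1` for all small `t > 0`,
whence `θ = 0`.
-/

open MeasureTheory Filter Topology Complex

open scoped ENNReal ComplexOrder

theorem ENNReal.eq_of_le_of_tsum_le {ι : Type*} {f g : ι → ℝ≥0∞} (hfg : f ≤ g)
    (hsum : ∑' i, g i ≤ ∑' i, f i) (hf : ∑' i, f i ≠ ∞) : f = g :=
  funext fun i => (hfg i).antisymm <| not_lt.1 fun hi =>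
    (ENNReal.tsum_lt_tsum hf hfg hi).not_ge hsum

theorem Complex.exists_norm_eq_one_mul_eq_norm (z : ℂ) : ∃ ω : ℂ, ‖ω‖ = 1 ∧ ω * z = ‖z‖ := by
  refine ⟨exp (-(arg z * I)), by simpa using norm_exp_ofReal_mul_I (-arg z), ?_⟩
  nth_rw 2 [← norm_mul_exp_arg_mul_I z]
  rw [mul_left_comm, ← exp_add, neg_add_cancel, exp_zero, mul_one]

theorem Complex.eq_one_of_norm_sub_ofReal_le {c : ℂ} {k : ℝ} (hc : ‖c‖ = 1) (hk : 0 < k)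
    (h : ‖c - k‖ ≤ 1 - k) : c = 1 := by
  have hsq : ‖c - k‖ ^ 2 ≤ (1 - k) ^ 2 := pow_le_pow_left₀ (norm_nonneg _) h 2
  have hc2 : c.re ^ 2 + c.im ^ 2 = 1 := by
    rw [← one_pow 2, ← hc, Complex.sq_norm, Complex.normSq_apply]; ring
  rw [Complex.sq_norm, Complex.normSq_apply] at hsq
  simp only [sub_re, ofReal_re, sub_im, ofReal_im, sub_zero] at hsq
  have hre : 1 ≤ c.re := by nlinarith
  have him : c.im = 0 := by nlinarith
  exact Complex.ext (by rw [one_re]; nlinarith) (by simpa using him)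

theorem eq_zero_of_eventually_exp_I_mul_eq_one {θ : ℝ}
    (h : ∀ᶠ t : ℝ in 𝓝[>] 0, exp (I * (θ * t)) = 1) : θ = 0 := by
  have hsmall : ∀ᶠ t : ℝ in 𝓝[>] 0, |θ * t| < 2 * Real.pi := by
    have : Tendsto (fun t : ℝ => |θ * t|) (𝓝[>] 0) (𝓝 0) := by
      simpa using ((continuous_const_mul θ).abs.tendsto 0).mono_left nhdsWithin_le_nhds
    exact this.eventually (gt_mem_nhds Real.two_pi_pos)
  obtain ⟨t, ht, htpos, htsmall⟩ :=
    (h.and ((eventually_mem_nhdsWithin (a := (0 : ℝ))).and hsmall)).exists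
  have hcos : Real.cos (θ * t) = 1 := by
    rw [← exp_ofReal_mul_I_re, ofReal_mul, mul_comm _ I, ht, one_re]
  rw [abs_lt] at htsmall
  rw [Real.cos_eq_one_iff_of_lt_of_lt htsmall.1 htsmall.2] at hcos
  exact (mul_eq_zero.1 hcos).resolve_right (Set.mem_Ioi.1 htpos).ne'

namespace LpCount

variable {X : Type*} [MeasurableSpace X] {p : ℝ≥0∞}

local notation "ℓ^" p:max "(" X ")" => Lp ℂ p (Measure.count : Measure X)

theorem ext {g h : ℓ^p(X)} (hgh : ∀ x, g x = h x) : g = h :=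
  Lp.ext (ae_of_all _ hgh)

@[simp] theorem zero_apply (x : X) : (0 : ℓ^p(X)) x = 0 :=
  Measure.ae_count_iff.1 (Lp.coeFn_zero ℂ p _) x

@[simp] theorem add_apply (g h : ℓ^p(X)) (x : X) : (g + h) x = g x + h x :=
  Measure.ae_count_iff.1 (Lp.coeFn_add g h) x

@[simp] theorem sub_apply (g h : ℓ^p(X)) (x : X) : (g - h) x = g x - h x :=
  Measure.ae_count_iff.1 (Lp.coeFn_sub g h) x

@[simp] theorem smul_apply (c : ℂ) (g : ℓ^p(X)) (x : X) : (c • g) x = c * g x :=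
  Measure.ae_count_iff.1 (Lp.coeFn_smul c g) x

@[simp] theorem star_apply (g : ℓ^p(X)) (x : X) : (star g) x = starRingEnd ℂ (g x) :=
  Measure.ae_count_iff.1 (Lp.coeFn_star g) x

theorem lipschitzWith_ofReal_norm : LipschitzWith 1 fun z : ℂ => (‖z‖ : ℂ) :=
  LipschitzWith.of_dist_le_mul fun z w => by
    simpa [Complex.dist_eq, ← Complex.ofReal_sub] using abs_norm_sub_norm_le z w

noncomputable def modulus (g : ℓ^p(X)) : ℓ^p(X) :=
  lipschitzWith_ofReal_norm.compLp (by simp) g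

@[simp] theorem modulus_apply (g : ℓ^p(X)) (x : X) : modulus g x = ‖g x‖ :=
  Measure.ae_count_iff.1 (lipschitzWith_ofReal_norm.coeFn_compLp _ g) x

@[simp] theorem norm_modulus_apply (g : ℓ^p(X)) (x : X) : ‖modulus g x‖ = ‖g x‖ := by
  rw [modulus_apply, Complex.norm_real, norm_norm]

section Operators

variable [Fact (1 ≤ p)]

def IsPositive (S : ℓ^p(X) →L[ℂ] ℓ^p(X)) : Prop :=
  ∀ g : ℓ^p(X), (∀ x, 0 ≤ g x) → ∀ x, 0 ≤ S g x

def IsReal (S : ℓ^p(X) →L[ℂ] ℓ^p(X)) : Prop :=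
  ∀ g : ℓ^p(X), S (star g) = star (S g)

variable {S : ℓ^p(X) →L[ℂ] ℓ^p(X)}

theorem norm_apply_le_apply_modulus (hpos : IsPositive S) (hreal : IsReal S) (g : ℓ^p(X))
    (x : X) : (‖S g x‖ : ℂ) ≤ S (modulus g) x := by
  have half_add_conj (z : ℂ) : (2⁻¹ : ℂ) * (z + starRingEnd ℂ z) = z.re := by
    rw [Complex.add_conj]; push_cast; ring
  obtain ⟨ω, hω, hωS⟩ := Complex.exists_norm_eq_one_mul_eq_norm (S g x)
  -- `|g| - Re (ω g) ≥ 0`, and `S` maps it to `S|g| - Re (ω S g)`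
  have hnonneg := hpos (modulus g - (2⁻¹ : ℂ) • (ω • g + star (ω • g))) (fun y => by
    simp only [sub_apply, modulus_apply, smul_apply, add_apply, star_apply, half_add_conj]
    rw [sub_nonneg, Complex.real_le_real]
    simpa [hω] using Complex.re_le_norm (ω * g y)) x
  simpa only [map_sub, map_smul, map_add, hreal (ω • g), sub_apply, smul_apply, add_apply,
    star_apply, hωS, half_add_conj, Complex.ofReal_re, sub_nonneg] using hnonneg

end Operators

variable [MeasurableSingletonClass X]

noncomputable def single (x₀ : X) : ℓ^p(X) :=
  indicatorConstLp p (measurableSet_singleton x₀) (by simp) 1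

theorem single_apply (x₀ x : X) : (single x₀ : ℓ^p(X)) x = ({x₀} : Set X).indicator 1 x :=
  Measure.ae_count_iff.1 indicatorConstLp_coeFn x

@[simp] theorem single_apply_self (x₀ : X) : (single x₀ : ℓ^p(X)) x₀ = 1 := by
  simp [single_apply]

@[simp] theorem single_apply_of_ne {x₀ x : X} (hx : x ≠ x₀) : (single x₀ : ℓ^p(X)) x = 0 := by
  simp [single_apply, hx]

theorem single_nonneg (x₀ x : X) : 0 ≤ (single x₀ : ℓ^p(X)) x := by
  rw [single_apply]
  exact Set.indicator_nonneg (fun _ _ => zero_le_one) x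

theorem norm_apply_le (hp : p ≠ 0) (g : ℓ^p(X)) (x : X) : ‖g x‖ ≤ ‖g‖ := by
  have hx : ({x} : Set X).indicator g = ({x} : Set X).indicator fun _ => g x :=
    Set.indicator_congr fun y hy => by rw [Set.mem_singleton_iff.1 hy]
  have hind := eLpNorm_indicator_le (s := {x}) (μ := Measure.count) (p := p) g
  rw [hx, eLpNorm_indicator_const' (measurableSet_singleton x) (by simp) hp] at hind
  simp only [Measure.count_singleton, ENNReal.one_rpow, mul_one] at hind
  rw [Lp.norm_def, ← ENNReal.ofReal_le_iff_le_toReal (Lp.eLpNorm_ne_top g), ofReal_norm]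
  exact hind

theorem continuous_apply [Fact (1 ≤ p)] (x : X) : Continuous fun g : ℓ^p(X) => g x :=
  LipschitzWith.continuous (K := 1) <| LipschitzWith.of_dist_le_mul fun g h => by
    rw [dist_eq_norm, dist_eq_norm, NNReal.coe_one, one_mul, ← sub_apply]
    exact norm_apply_le (zero_lt_one.trans_le Fact.out).ne' (g - h) x

theorem eLpNorm_rpow_eq_tsum (hp0 : p ≠ 0) (hp : p ≠ ∞) (g : X → ℂ) :
    eLpNorm g p Measure.count ^ p.toReal = ∑' x, ‖g x‖ₑ ^ p.toReal := by
  rw [eLpNorm_eq_eLpNorm' hp0 hp,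
    ← lintegral_rpow_enorm_eq_rpow_eLpNorm' (ENNReal.toReal_pos hp0 hp), lintegral_count]

/-- Strict monotonicity of the `ℓᵖ` norm, `p < ∞`. -/
theorem norm_apply_eq_of_norm_apply_le (hp0 : p ≠ 0) (hp : p ≠ ∞) {g h : ℓ^p(X)}
    (hle : ∀ x, ‖g x‖ ≤ ‖h x‖) (hnorm : ‖h‖ ≤ ‖g‖) (x : X) : ‖g x‖ = ‖h x‖ := by
  have hq := ENNReal.toReal_pos hp0 hp
  have hsum : eLpNorm h p Measure.count ^ p.toReal ≤ eLpNorm g p Measure.count ^ p.toReal := by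
    gcongr
    exact (ENNReal.toReal_le_toReal (Lp.eLpNorm_ne_top h) (Lp.eLpNorm_ne_top g)).1 hnorm
  rw [eLpNorm_rpow_eq_tsum hp0 hp, eLpNorm_rpow_eq_tsum hp0 hp] at hsum
  have hfin : ∑' x, ‖g x‖ₑ ^ p.toReal ≠ ∞ := by
    rw [← eLpNorm_rpow_eq_tsum hp0 hp]
    exact ENNReal.rpow_ne_top_of_nonneg hq.le (Lp.eLpNorm_ne_top g)
  have hpow := congrFun (ENNReal.eq_of_le_of_tsum_le
    (fun y => ENNReal.rpow_le_rpow (enorm_le_iff_norm_le.2 (hle y)) hq.le) hsum hfin) x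
  exact enorm_eq_iff_norm_eq.1 (ENNReal.rpow_left_injective hq.ne' hpow)

variable [Fact (1 ≤ p)] {S : ℓ^p(X) →L[ℂ] ℓ^p(X)}

theorem apply_modulus_eq_modulus (hpos : IsPositive S) (hreal : IsReal S) (hp : p ≠ ∞)
    (hcontr : ∀ g, ‖S g‖ ≤ ‖g‖) {f : ℓ^p(X)} (hf : ∀ x, ‖S f x‖ = ‖f x‖) :
    S (modulus f) = modulus f := by
  have hdom (x : X) : (‖f x‖ : ℂ) ≤ S (modulus f) x :=
    hf x ▸ norm_apply_le_apply_modulus hpos hreal f x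
  have hnonneg (x : X) : 0 ≤ S (modulus f) x := (zero_le_real.2 (norm_nonneg _)).trans (hdom x)
  have hle (x : X) : ‖modulus f x‖ ≤ ‖S (modulus f) x‖ := by
    simpa using (Complex.le_def.1 (hdom x)).1.trans (Complex.re_le_norm _)
  refine ext fun x => ?_
  rw [Complex.eq_coe_norm_of_nonneg (hnonneg x), ← norm_apply_eq_of_norm_apply_le
    (zero_lt_one.trans_le Fact.out).ne' hp hle (hcontr _) x, norm_modulus_apply, modulus_apply]

theorem eq_one_of_apply_eq_smul (hpos : IsPositive S) (hreal : IsReal S) (hp : p ≠ ∞)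
    (hcontr : ∀ g, ‖S g‖ ≤ ‖g‖) {f : ℓ^p(X)} {c : ℂ} (heig : S f = c • f) (hc : ‖c‖ = 1)
    {x₀ : X} (hx₀ : f x₀ ≠ 0) (hdiag : 0 < (S (single x₀) x₀).re) : c = 1 := by
  have hfix : S (modulus f) = modulus f :=
    apply_modulus_eq_modulus hpos hreal hp hcontr fun x => by
      rw [heig, smul_apply, norm_mul, hc, one_mul]
  have hmod : modulus (f - f x₀ • single x₀) = modulus f - (‖f x₀‖ : ℂ) • single x₀ :=
    ext fun x => by
      by_cases hx : x = x₀
      · subst hx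
        simp only [modulus_apply, sub_apply, smul_apply, single_apply_self, mul_one, sub_self,
          norm_zero, Complex.ofReal_zero]
      · simp only [modulus_apply, sub_apply, smul_apply, single_apply_of_ne hx, mul_zero,
          sub_zero]
  have hdom := norm_apply_le_apply_modulus hpos hreal (f - f x₀ • single x₀) x₀
  simp only [hmod, map_sub, map_smul, hfix, heig, sub_apply, smul_apply, modulus_apply] at hdom
  set k := S (single x₀) x₀
  have hk : k = ‖k‖ := Complex.eq_coe_norm_of_nonneg (hpos _ (single_nonneg x₀) x₀)
  rw [hk] at hdom
  have hnorm : ‖f x₀‖ * ‖c - ‖k‖‖ ≤ ‖f x₀‖ * (1 - ‖k‖) := by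
    rw [← norm_mul, mul_sub, mul_comm (f x₀), mul_one_sub]
    exact_mod_cast hdom
  exact Complex.eq_one_of_norm_sub_ofReal_le hc (hdiag.trans_le (Complex.re_le_norm k))
    (le_of_mul_le_mul_left hnorm (norm_pos_iff.2 hx₀))

end LpCount

open LpCount in
theorem peripheral_point_spectrum_trivial_lp
    {X : Type*} [MeasurableSpace X] [MeasurableSingletonClass X]
    (p : ENNReal) [Fact (1 ≤ p)] (hp : p ≠ ⊤)
    (T : ℝ → Lp ℂ p (Measure.count : Measure X) →L[ℂ] Lp ℂ p (Measure.count : Measure X))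
    (hT0 : T 0 = 1)
    (hcontr : ∀ t : ℝ, 0 ≤ t → ∀ g, ‖T t g‖ ≤ ‖g‖)
    (hcont : ∀ f, Continuous fun t : ℝ => T t f)
    (hpos : ∀ t : ℝ, 0 ≤ t → ∀ g : Lp ℂ p (Measure.count : Measure X),
      (∀ᵐ x ∂(Measure.count : Measure X), (g x).im = 0 ∧ 0 ≤ (g x).re) →
      ∀ᵐ x ∂(Measure.count : Measure X), ((T t g) x).im = 0 ∧ 0 ≤ ((T t g) x).re)
    (hconj : ∀ t : ℝ, 0 ≤ t → ∀ g gc : Lp ℂ p (Measure.count : Measure X),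
      (⇑gc =ᵐ[(Measure.count : Measure X)] fun x => starRingEnd ℂ (g x)) →
      ⇑(T t gc) =ᵐ[(Measure.count : Measure X)] fun x => starRingEnd ℂ ((T t g) x))
    (f : Lp ℂ p (Measure.count : Measure X)) (hf : f ≠ 0) (θ : ℝ)
    (heig : ∀ t : ℝ, 0 ≤ t → T t f = Complex.exp (Complex.I * (θ * t)) • f) :
    θ = 0 := by
  have hTpos (t : ℝ) (ht : 0 ≤ t) : IsPositive (T t) := fun g hg x => by
    have := Measure.ae_count_iff.1 (hpos t ht g (ae_of_all _ fun y =>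
      ⟨(Complex.nonneg_iff.1 (hg y)).2.symm, (hg y).1⟩)) x
    exact Complex.nonneg_iff.2 ⟨this.2, this.1.symm⟩
  have hTreal (t : ℝ) (ht : 0 ≤ t) : IsReal (T t) := fun g => ext fun x => by
    simpa using Measure.ae_count_iff.1 (hconj t ht g (star g) (Lp.coeFn_star g)) x
  obtain ⟨x₀, hx₀⟩ : ∃ x, f x ≠ 0 := by
    by_contra! h
    exact hf (ext fun x => by rw [h x, LpCount.zero_apply])
  have hdiag : ∀ᶠ t in 𝓝 0, 0 < (T t (single x₀) x₀).re := by
    have hk : Continuous fun t => (T t (single x₀) x₀).re :=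
      continuous_re.comp ((LpCount.continuous_apply x₀).comp (hcont _))
    refine hk.continuousAt.eventually (lt_mem_nhds ?_)
    simp [hT0]
  apply eq_zero_of_eventually_exp_I_mul_eq_one
  filter_upwards [eventually_mem_nhdsWithin, nhdsWithin_le_nhds hdiag] with t ht hk
  exact eq_one_of_apply_eq_smul (hTpos t ht.le) (hTreal t ht.le) hp (hcontr t ht.le)
    (heig t ht.le) (by rw [← ofReal_mul]; exact norm_exp_I_mul_ofReal _) hx₀ hk
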